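/- arXiv:1912.02516 — 2 statements merged into one kernel-verified Lean document; each statement's English description precedes it below -/
import Mathlib

section
/- Suppose F = f + h is uniformly convex of degree q ≥ 2 with parameter σ_q > 0. Let H = βL_p with β > 1, let x ∈ dom h, and let T be a minimizer over E of y ↦ Ω_p(f,x;y) + (H/(p+1)!)‖y−x‖^{p+1} + h(y). Then for every subgradient g ∈ ∂h(x): ‖∇f(x) + g‖ ≥ σ_q·‖x − T‖^{q−1}; consequently η(x) ≥ σ_q·‖x − T‖^{q−1}. -/
open scoped RealInnerProductSpace

/-- The `p`-th order Taylor polynomial `Ω_p(f,x;y)` of `f` at `x`, evaluated at `y`. -/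
noncomputable def OmegaTaylor {E : Type*} [NormedAddCommGroup E] [InnerProductSpace ℝ E]
    (p : ℕ) (f : E → ℝ) (x y : E) : ℝ :=
  ∑ k ∈ Finset.range (p + 1),
    (1 / (Nat.factorial k : ℝ)) * iteratedFDeriv ℝ k f x (fun _ => y - x)

/-- `g` is a subgradient of `φ` at `z`, relative to the set `s`. -/
def IsSubgradOn {E : Type*} [NormedAddCommGroup E] [InnerProductSpace ℝ E]
    (s : Set E) (φ : E → ℝ) (g z : E) : Prop :=
  ∀ y ∈ s, φ z + ⟪g, y - z⟫ ≤ φ y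

/-!
Put `m := Ω_p(f,x;·) + H/(p+1)! ‖· - x‖^(p+1)`, so that `T` minimizes `m + h` over `dom h`.
Both `G_x := ∇f(x) + g` and `G_T := ∇f(T) - ∇m(T)` are subgradients of `F`: the first by convexity
of `f`, the second because first-order optimality of `T` makes `-∇m(T)` a subgradient of `h` at
`T`. With `d := T - x`, the derivative `Dm(T)[d]` is the Taylor expansion of `Df(·)[d]` at `x`
plus `H/p! ‖d‖^(p+1)`, while the Lipschitz `p`-th derivative bounds the error of that expansion
by `L_p/p! ‖d‖^(p+1)`. As `H ≥ L_p`, `⟪G_T, x - T⟫ ≥ 0`, and uniform convexity gives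
`σ ‖x - T‖^q ≤ ⟪G_x - G_T, x - T⟫ ≤ ‖G_x‖ ‖x - T‖`.
-/

open Set Filter Topology

lemma hasDerivAt_mul_pow_succ_div_factorial (a t : ℝ) (n : ℕ) :
    HasDerivAt (fun s => a * s ^ (n + 1) / (n + 1).factorial) (a * t ^ n / n.factorial) t := by
  refine (((hasDerivAt_pow (n + 1) t).const_mul a).div_const _).congr_deriv ?_
  rw [Nat.add_sub_cancel, Nat.factorial_succ]
  push_cast
  field_simp

lemma hasDerivAt_sum_mul_pow_div_factorial (a : ℕ → ℝ) (n : ℕ) (t : ℝ) :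
    HasDerivAt (fun s => ∑ k ∈ Finset.range (n + 1), a k * s ^ k / k.factorial)
      (∑ k ∈ Finset.range n, a (k + 1) * t ^ k / k.factorial) t := by
  simp_rw [Finset.sum_range_succ' _ n]
  simpa using (HasDerivAt.fun_sum fun k _ =>
    hasDerivAt_mul_pow_succ_div_factorial (a (k + 1)) t k).add_const (a 0)

theorem abs_sub_taylor_le_of_lipschitz_deriv {g : ℕ → ℝ → ℝ} {Λ : ℝ} (n : ℕ)
    (hg : ∀ k < n, ∀ t ∈ Icc (0 : ℝ) 1, HasDerivAt (g k) (g (k + 1) t) t)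
    (hlip : ∀ t ∈ Icc (0 : ℝ) 1, |g n t - g n 0| ≤ Λ * t) :
    ∀ t ∈ Icc (0 : ℝ) 1, |g 0 t - ∑ k ∈ Finset.range (n + 1), g k 0 * t ^ k / k.factorial| ≤
      Λ * t ^ (n + 1) / (n + 1).factorial := by
  induction n generalizing g with
  | zero => simpa using hlip
  | succ n ih =>
    have hrem := ih (g := fun k => g (k + 1)) (fun k hk => hg (k + 1) (by omega)) hlip
    have hderiv (t : ℝ) (ht : t ∈ Icc (0 : ℝ) 1) :=
      (hg 0 (by omega) t ht).sub (hasDerivAt_sum_mul_pow_div_factorial (g · 0) (n + 1) t)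
    exact image_norm_le_of_norm_deriv_right_le_deriv_boundary
      (fun t ht => (hderiv t ht).continuousAt.continuousWithinAt)
      (fun t ht => (hderiv t (Ico_subset_Icc_self ht)).hasDerivWithinAt)
      (by simp [Finset.sum_range_succ'])
      (fun t => hasDerivAt_mul_pow_succ_div_factorial Λ t (n + 1))
      (fun t ht => hrem t (Ico_subset_Icc_self ht))

section

variable {E F : Type*} [NormedAddCommGroup E] [NormedSpace ℝ E] [NormedAddCommGroup F]
  [NormedSpace ℝ F]

theorem hasDerivAt_add_smul (x d : E) (t : ℝ) : HasDerivAt (fun s : ℝ => x + s • d) d t := by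
  simpa using ((hasDerivAt_id t).smul_const d).const_add x

theorem ContDiffAt.hasDerivAt_iteratedFDeriv_add_smul {f : E → F} {x d : E} {t : ℝ} {k : ℕ}
    (hf : ContDiffAt ℝ (k + 1) f (x + t • d)) :
    HasDerivAt (fun s : ℝ => iteratedFDeriv ℝ k f (x + s • d) (fun _ => d))
      (iteratedFDeriv ℝ (k + 1) f (x + t • d) (fun _ => d)) t := by
  rw [← hf.deriv_fderiv_add_smul]
  have hd : DifferentiableAt ℝ (iteratedFDeriv ℝ k f) (x + t • d) :=
    hf.differentiableAt_iteratedFDeriv (by norm_cast; omega)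
  exact ((hd.hasFDerivAt.continuousMultilinear_apply_const _).comp_hasDerivAt t
    (hasDerivAt_add_smul x d t)).differentiableAt.hasDerivAt

theorem abs_fderiv_apply_sub_sum_iteratedFDeriv_le {f : E → ℝ} {U : Set E} {p : ℕ} {L : ℝ}
    {x y : E} (hU : IsOpen U) (hf : ContDiffOn ℝ p f U) (hp : 1 ≤ p) (hseg : segment ℝ x y ⊆ U)
    (hLip : ∀ z ∈ segment ℝ x y,
      ‖iteratedFDeriv ℝ p f z - iteratedFDeriv ℝ p f x‖ ≤ L * ‖z - x‖) :
    |fderiv ℝ f y (y - x) - ∑ k ∈ Finset.range p,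
        iteratedFDeriv ℝ (k + 1) f x (fun _ => y - x) / k.factorial| ≤
      L * ‖y - x‖ ^ (p + 1) / p.factorial := by
  obtain ⟨n, rfl⟩ : ∃ n, p = n + 1 := ⟨p - 1, by omega⟩
  have hmem : ∀ t ∈ Icc (0 : ℝ) 1, x + t • (y - x) ∈ segment ℝ x y := fun t ht =>
    segment_eq_image' ℝ x y ▸ mem_image_of_mem _ ht
  have hline := abs_sub_taylor_le_of_lipschitz_deriv
    (g := fun k t => iteratedFDeriv ℝ (k + 1) f (x + t • (y - x)) (fun _ => y - x))
    (Λ := L * ‖y - x‖ ^ (n + 2)) n ?_ ?_ 1 (right_mem_Icc.mpr zero_le_one)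
  · simpa [iteratedFDeriv_one_apply] using hline
  · intro k hk t ht
    exact ((hf.contDiffAt (hU.mem_nhds (hseg (hmem t ht)))).of_le
      (by norm_cast; omega)).hasDerivAt_iteratedFDeriv_add_smul
  · intro t ht
    have hz := hLip _ (hmem t ht)
    rw [add_sub_cancel_left, norm_smul, Real.norm_of_nonneg ht.1] at hz
    simp only [zero_smul, add_zero, ← sub_apply]
    calc _ ≤ ‖iteratedFDeriv ℝ (n + 1) f (x + t • (y - x)) - iteratedFDeriv ℝ (n + 1) f x‖ *
          ‖y - x‖ ^ (n + 1) :=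
          ContinuousMultilinearMap.le_opNorm_mul_pow_of_le _ (pi_norm_const_le _)
      _ ≤ L * (t * ‖y - x‖) * ‖y - x‖ ^ (n + 1) := by gcongr
      _ = L * ‖y - x‖ ^ (n + 2) * t := by ring

end

section

variable {E : Type*} [NormedAddCommGroup E] [InnerProductSpace ℝ E] {s : Set E} {z : E}

theorem ConvexOn.sub_le_of_isMinOn_add {φ h : E → ℝ} {φ' : E →L[ℝ] ℝ} (hh : ConvexOn ℝ s h)
    (hz : z ∈ s) (hφ : HasFDerivAt φ φ' z) (hmin : IsMinOn (φ + h) s z) {y : E} (hy : y ∈ s) :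
    h z - h y ≤ φ' (y - z) := by
  set ψ : ℝ → ℝ := fun t => φ (z + t • (y - z)) + t * (h y - h z)
  have hψ : HasDerivAt ψ (φ' (y - z) + (h y - h z)) 0 :=
    (hφ.comp_hasDerivAt_of_eq 0 (hasDerivAt_add_smul z (y - z) 0) (by simp)).add
      ((hasDerivAt_id (0 : ℝ)).mul_const _ |>.congr_deriv (one_mul _))
  -- along the segment, convexity of `h` bounds `φ + h` by `ψ + h z`
  have hψmin : IsMinOn ψ (Icc 0 1) 0 := by
    refine isMinOn_iff.mpr fun t ht => ?_
    have hzt : z + t • (y - z) = (1 - t) • z + t • y := by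
      rw [smul_sub, sub_smul, one_smul]; abel
    have hconv := hh.2 hz hy (by linarith [ht.2]) ht.1 (sub_add_cancel 1 t)
    have hmin_t :=
      isMinOn_iff.mp hmin _ (hh.1 hz hy (by linarith [ht.2]) ht.1 (sub_add_cancel 1 t))
    simp only [Pi.add_apply, smul_eq_mul] at hconv hmin_t
    simp only [ψ, hzt, zero_smul, add_zero, zero_mul]
    nlinarith
  have := hψmin.localize.hasFDerivWithinAt_nonneg hψ.hasDerivWithinAt.hasFDerivWithinAt
    (y := 1) (mem_posTangentConeAt_of_segment_subset (by simp [segment_eq_Icc]))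
  simp only [ContinuousLinearMap.toSpanSingleton_apply, one_smul] at this
  linarith

theorem ConvexOn.isSubgradOn_neg_gradient_of_isMinOn_add [CompleteSpace E] {φ h : E → ℝ}
    (hh : ConvexOn ℝ s h) (hz : z ∈ s) (hφ : DifferentiableAt ℝ φ z)
    (hmin : IsMinOn (φ + h) s z) : IsSubgradOn s h (-gradient φ z) z := fun y hy => by
  rw [inner_neg_left, inner_gradient_left]
  linarith [hh.sub_le_of_isMinOn_add hz hφ.hasFDerivAt hmin hy]

-- every point minimizes `-f + f`
theorem ConvexOn.isSubgradOn_gradient [CompleteSpace E] {f : E → ℝ} (hf : ConvexOn ℝ s f)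
    (hz : z ∈ s) (hd : DifferentiableAt ℝ f z) : IsSubgradOn s f (gradient f z) z :=
  fun y hy => by
    have := hf.sub_le_of_isMinOn_add hz hd.hasFDerivAt.neg (by simp [isMinOn_iff]) hy
    rw [inner_gradient_left]
    rw [neg_apply] at this
    linarith

theorem IsSubgradOn.add {φ ψ : E → ℝ} {g g' : E} (hφ : IsSubgradOn s φ g z)
    (hψ : IsSubgradOn s ψ g' z) : IsSubgradOn s (fun y => φ y + ψ y) (g + g') z :=
  fun y hy => by
    rw [inner_add_left]
    linarith [hφ y hy, hψ y hy]

theorem mul_norm_rpow_sub_one_le_of_le_inner {G G' u : E} {σ q : ℝ} (hq : 1 < q)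
    (huc : σ * ‖u‖ ^ q ≤ ⟪G - G', u⟫) (hG' : 0 ≤ ⟪G', u⟫) : σ * ‖u‖ ^ (q - 1) ≤ ‖G‖ := by
  rcases eq_or_ne u 0 with rfl | hu
  · simp [Real.zero_rpow (by linarith : q - 1 ≠ 0)]
  have hpos : 0 < ‖u‖ := norm_pos_iff.mpr hu
  have hle : σ * ‖u‖ ^ (q - 1) * ‖u‖ ≤ ‖G‖ * ‖u‖ := calc
    σ * ‖u‖ ^ (q - 1) * ‖u‖ = σ * ‖u‖ ^ q := by
      rw [mul_assoc, ← Real.rpow_add_one hpos.ne', sub_add_cancel]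
    _ ≤ ⟪G, u⟫ := by rw [inner_sub_left] at huc; linarith
    _ ≤ ‖G‖ * ‖u‖ := real_inner_le_norm G u
  exact le_of_mul_le_mul_right hle hpos

noncomputable def regularizedTaylorModel (p : ℕ) (f : E → ℝ) (x : E) (c : ℝ) (y : E) : ℝ :=
  OmegaTaylor p f x y + c * ‖y - x‖ ^ (p + 1)

theorem differentiable_regularizedTaylorModel {p : ℕ} (hp : 1 ≤ p) (f : E → ℝ) (x : E)
    (c : ℝ) : Differentiable ℝ (regularizedTaylorModel p f x c) := by
  have hnorm : Differentiable ℝ fun y : E => ‖y - x‖ ^ (p + 1) := by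
    have := (differentiable_norm_rpow (E := E) (p := p + 1) (by norm_cast; omega)).comp
      (differentiable_id.sub_const x)
    simpa [Function.comp_def, ← Real.rpow_natCast] using this
  have hterm (k : ℕ) : Differentiable ℝ fun y : E => iteratedFDeriv ℝ k f x (fun _ => y - x) :=
    ((iteratedFDeriv ℝ k f x).contDiff.differentiable one_ne_zero).comp (by fun_prop)
  unfold regularizedTaylorModel OmegaTaylor
  fun_prop

theorem regularizedTaylorModel_add_smul {p : ℕ} (f : E → ℝ) (x d : E) (c : ℝ) {t : ℝ}
    (ht : 0 ≤ t) : regularizedTaylorModel p f x c (x + t • d) =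
      ∑ k ∈ Finset.range (p + 1), iteratedFDeriv ℝ k f x (fun _ => d) * t ^ k / k.factorial +
        c * ‖d‖ ^ (p + 1) * t ^ (p + 1) := by
  simp only [regularizedTaylorModel, OmegaTaylor, add_sub_cancel_left, norm_smul,
    Real.norm_of_nonneg ht, ContinuousMultilinearMap.map_smul_univ, Finset.prod_const,
    Finset.card_univ, Fintype.card_fin, smul_eq_mul, mul_pow]
  congr 1
  · exact Finset.sum_congr rfl fun k _ => by ring
  · ring

theorem fderiv_regularizedTaylorModel_apply_sub {p : ℕ} (hp : 1 ≤ p) (f : E → ℝ) (x y : E)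
    (c : ℝ) : fderiv ℝ (regularizedTaylorModel p f x c) y (y - x) =
      ∑ k ∈ Finset.range p, iteratedFDeriv ℝ (k + 1) f x (fun _ => y - x) / k.factorial +
        c * (p + 1) * ‖y - x‖ ^ (p + 1) := by
  have hline : HasDerivAt (fun s : ℝ => regularizedTaylorModel p f x c (x + s • (y - x)))
      (fderiv ℝ (regularizedTaylorModel p f x c) y (y - x)) 1 :=
    (differentiable_regularizedTaylorModel hp f x c y).hasFDerivAt.comp_hasDerivAt_of_eq 1
      (hasDerivAt_add_smul x (y - x) 1) (by simp)
  -- on the ray `s ≥ 0` the model is a polynomial in `s`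
  have hpoly := (hasDerivAt_sum_mul_pow_div_factorial
    (fun k => iteratedFDeriv ℝ k f x (fun _ => y - x)) p 1).add
      ((hasDerivAt_pow (p + 1) (1 : ℝ)).const_mul (c * ‖y - x‖ ^ (p + 1)))
  refine hline.unique (hpoly.congr_of_eventuallyEq ?_) |>.trans ?_
  · filter_upwards [lt_mem_nhds one_pos] with s hs
    exact regularizedTaylorModel_add_smul f x (y - x) c hs.le
  · simp only [one_pow, mul_one]
    push_cast
    ring

theorem fderiv_apply_sub_le_fderiv_regularizedTaylorModel {f : E → ℝ} {U : Set E} {p : ℕ}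
    {L H : ℝ} {x y : E} (hU : IsOpen U) (hf : ContDiffOn ℝ p f U) (hp : 1 ≤ p)
    (hseg : segment ℝ x y ⊆ U)
    (hLip : ∀ z ∈ segment ℝ x y,
      ‖iteratedFDeriv ℝ p f z - iteratedFDeriv ℝ p f x‖ ≤ L * ‖z - x‖) (hLH : L ≤ H) :
    fderiv ℝ f y (y - x) ≤
      fderiv ℝ (regularizedTaylorModel p f x (H / (p + 1).factorial)) y (y - x) := by
  have hrem := abs_le.mp (abs_fderiv_apply_sub_sum_iteratedFDeriv_le hU hf hp hseg hLip)
  have hc : H / (p + 1).factorial * (p + 1) = H / p.factorial := by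
    push_cast [Nat.factorial_succ]
    field_simp
  have hLH' : L * ‖y - x‖ ^ (p + 1) / p.factorial ≤ H / p.factorial * ‖y - x‖ ^ (p + 1) := by
    rw [div_mul_eq_mul_div]
    gcongr
  rw [fderiv_regularizedTaylorModel_apply_sub hp, hc]
  linarith [hrem.2]

end

theorem rcts_step_subgradient_lower_bound_general
    {E : Type*} [NormedAddCommGroup E] [InnerProductSpace ℝ E] [FiniteDimensional ℝ E]
    (p : ℕ) (hp : 2 ≤ p) (f h F : E → ℝ) (domh U : Set E)
    (hU : IsOpen U) (hsub : domh ⊆ U)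
    (hf : ContDiffOn ℝ (p : ℕ∞) f U) (hfconv : ConvexOn ℝ U f)
    (hhconv : ConvexOn ℝ domh h)
    (hF : ∀ z, F z = f z + h z)
    (Lp H β : ℝ) (hLp : 0 < Lp) (hβ : 1 < β) (hH : H = β * Lp)
    (hLip : ∀ z ∈ domh, ∀ w ∈ domh,
      ‖iteratedFDeriv ℝ p f z - iteratedFDeriv ℝ p f w‖ ≤ Lp * ‖z - w‖)
    (q σ : ℝ) (hq : 2 ≤ q)
    (huc : ∀ z ∈ domh, ∀ w ∈ domh, ∀ Gz Gw : E,
      IsSubgradOn domh F Gz z → IsSubgradOn domh F Gw w →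
      σ * ‖z - w‖ ^ q ≤ ⟪Gz - Gw, z - w⟫)
    (x : E) (hx : x ∈ domh) (T : E) (hT : T ∈ domh)
    (hmin : ∀ y ∈ domh,
      OmegaTaylor p f x T + H / (Nat.factorial (p + 1) : ℝ) * ‖T - x‖ ^ (p + 1) + h T ≤
        OmegaTaylor p f x y + H / (Nat.factorial (p + 1) : ℝ) * ‖y - x‖ ^ (p + 1) + h y) :
    ∀ g : E, IsSubgradOn domh h g x →
      σ * ‖x - T‖ ^ (q - 1) ≤ ‖gradient f x + g‖ := by
  intro g hg
  have hdom : Convex ℝ domh := hhconv.1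
  have hfdom : ConvexOn ℝ domh f := hfconv.subset hsub hdom
  have hfd : ∀ z ∈ domh, DifferentiableAt ℝ f z := fun z hz =>
    (hf.contDiffAt (hU.mem_nhds (hsub hz))).differentiableAt (by norm_cast; omega)
  set m := regularizedTaylorModel p f x (H / (p + 1).factorial)
  have hF' : F = fun z => f z + h z := funext hF
  have hGx : IsSubgradOn domh F (gradient f x + g) x :=
    hF' ▸ (hfdom.isSubgradOn_gradient hx (hfd x hx)).add hg
  have hGT : IsSubgradOn domh F (gradient f T + -gradient m T) T :=
    hF' ▸ (hfdom.isSubgradOn_gradient hT (hfd T hT)).add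
      (hhconv.isSubgradOn_neg_gradient_of_isMinOn_add hT
        (differentiable_regularizedTaylorModel (by omega) f x _ T) (isMinOn_iff.mpr hmin))
  have hdescent : fderiv ℝ f T (T - x) ≤ fderiv ℝ m T (T - x) :=
    fderiv_apply_sub_le_fderiv_regularizedTaylorModel hU hf (by omega)
      ((hdom.segment_subset hx hT).trans hsub)
      (fun z hz => hLip z (hdom.segment_subset hx hT hz) x hx) (by nlinarith)
  refine mul_norm_rpow_sub_one_le_of_le_inner (by linarith) (huc x hx T hT _ _ hGx hGT) ?_
  rw [inner_add_left, inner_neg_left, inner_gradient_left, inner_gradient_left, ← neg_sub T x,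
    map_neg, map_neg]
  linarith

/-- if `F = f + h` is uniformly convex of degree `q ≥ 2` with parameter
`σ_q > 0`, `H = βL_p` with `β > 1`, and `T` is a tensor step from `x ∈ dom h`, then
every subgradient `g ∈ ∂h(x)` satisfies `‖∇f(x) + g‖ ≥ σ_q ‖x − T‖^{q−1}`
(hence `η(x) ≥ σ_q ‖x − T‖^{q−1}`). -/
theorem rcts_step_subgradient_lower_bound
    {E : Type*} [NormedAddCommGroup E] [InnerProductSpace ℝ E] [FiniteDimensional ℝ E]
    (p : ℕ) (hp : 2 ≤ p) (f h F : E → ℝ) (domh U : Set E)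
    (hdomcl : IsClosed domh) (hU : IsOpen U) (hUconv : Convex ℝ U) (hsub : domh ⊆ U)
    (hf : ContDiffOn ℝ (p : ℕ∞) f U) (hfconv : ConvexOn ℝ U f)
    (hhconv : ConvexOn ℝ domh h) (hhlsc : LowerSemicontinuousOn h domh)
    (hF : ∀ z, F z = f z + h z)
    (Lp H β : ℝ) (hLp : 0 < Lp) (hβ : 1 < β) (hH : H = β * Lp)
    (hLip : ∀ z ∈ domh, ∀ w ∈ domh,
      ‖iteratedFDeriv ℝ p f z - iteratedFDeriv ℝ p f w‖ ≤ Lp * ‖z - w‖)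
    (q σ : ℝ) (hq : 2 ≤ q) (hσ : 0 < σ)
    (huc : ∀ z ∈ domh, ∀ w ∈ domh, ∀ Gz Gw : E,
      IsSubgradOn domh F Gz z → IsSubgradOn domh F Gw w →
      σ * ‖z - w‖ ^ q ≤ ⟪Gz - Gw, z - w⟫)
    (x : E) (hx : x ∈ domh) (T : E) (hT : T ∈ domh)
    (hmin : ∀ y ∈ domh,
      OmegaTaylor p f x T + H / (Nat.factorial (p + 1) : ℝ) * ‖T - x‖ ^ (p + 1) + h T ≤
        OmegaTaylor p f x y + H / (Nat.factorial (p + 1) : ℝ) * ‖y - x‖ ^ (p + 1) + h y) :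
    ∀ g : E, IsSubgradOn domh h g x →
      σ * ‖x - T‖ ^ (q - 1) ≤ ‖gradient f x + g‖ :=
  rcts_step_subgradient_lower_bound_general p hp f h F domh U hU hsub hf hfconv hhconv hF Lp H β hLp
    hβ hH hLip q σ hq huc x hx T hT hmin
end

section
/- Let H ≥ pL_p and let x* be a global minimizer of F = f + h with F* = F(x*). For any x ∈ dom h, if T is a minimizer over E of y ↦ Ω_p(f,x;y) + (H/(p+1)!)‖y−x‖^{p+1} + h(y), then F(T) − F* ≤ ((H+L_p)/(p+1)!)·‖x − x*‖^{p+1}. -/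
/-!
A Taylor model with `L`-Lipschitz `p`-th derivative satisfies
`|f y - Ω_p(f,x;y)| ≤ L/(p+1)! ‖y - x‖^(p+1)`. Since `H ≥ L_p`, the regularized model therefore
majorizes `F`, while at `x*` it exceeds `F(x*)` by at most `(H + L_p)/(p+1)! ‖x - x*‖^(p+1)`;
the minimality of `T` for the model connects the two.

The Taylor estimate is proved along the segment `t ↦ x + t • (y - x)`: the Taylor remainders
`ψ_j` of the directional derivatives `t ↦ D^j f(x + t v)[v]^j` vanish at `0` and satisfy
`ψ_j' = ψ_(j+1)`, and `|ψ_p t| ≤ L ‖v‖^(p+1) t`, so the comparison principle integrates this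
bound `p` times.
-/

open scoped RealInnerProductSpace

open Set Finset Nat

lemma hasDerivAt_pow_succ_div_factorial (k : ℕ) (t : ℝ) :
    HasDerivAt (fun s : ℝ => s ^ (k + 1) / (k + 1)!) (t ^ k / k !) t := by
  refine ((hasDerivAt_pow (k + 1) t).div_const ((k + 1)! : ℝ)).congr_deriv ?_
  rw [Nat.factorial_succ]
  push_cast
  field_simp

lemma hasDerivAt_sum_pow_div_factorial_mul (c : ℕ → ℝ) (n : ℕ) (t : ℝ) :
    HasDerivAt (fun s : ℝ => ∑ k ∈ range (n + 1), s ^ k / k ! * c k)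
      (∑ k ∈ range n, t ^ k / k ! * c (k + 1)) t := by
  simp_rw [sum_range_succ' _ n, pow_zero, factorial_zero, cast_one, div_one, one_mul]
  exact (HasDerivAt.fun_sum fun k _ =>
    (hasDerivAt_pow_succ_div_factorial k t).mul_const (c (k + 1))).add_const (c 0)

theorem abs_sub_sum_taylor_le_of_hasDerivAt {p : ℕ} {u : ℕ → ℝ → ℝ} {b C : ℝ}
    (hu : ∀ j < p, ∀ t ∈ Icc 0 b, HasDerivAt (u j) (u (j + 1) t) t)
    (hlast : ∀ t ∈ Icc 0 b, |u p t - u p 0| ≤ C * t) {t : ℝ} (ht : t ∈ Icc 0 b) :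
    |u 0 t - ∑ k ∈ range (p + 1), t ^ k / k ! * u k 0| ≤ C * (t ^ (p + 1) / (p + 1)!) := by
  induction p generalizing u t with
  | zero => simpa using hlast t ht
  | succ p ih =>
    set ψ : ℝ → ℝ := fun t => u 0 t - ∑ k ∈ range (p + 2), t ^ k / k ! * u k 0
    have hψ : ∀ t ∈ Icc 0 b,
        HasDerivAt ψ (u 1 t - ∑ k ∈ range (p + 1), t ^ k / k ! * u (k + 1) 0) t := fun t ht =>
      (hu 0 (by omega) t ht).sub (hasDerivAt_sum_pow_div_factorial_mul (u · 0) (p + 1) t)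
    have hψ0 : ψ 0 = 0 := by simp [ψ, sum_range_succ' _ (p + 1)]
    exact image_norm_le_of_norm_deriv_right_le_deriv_boundary
      (fun t ht => (hψ t ht).continuousAt.continuousWithinAt)
      (fun t ht => (hψ t (Ico_subset_Icc_self ht)).hasDerivWithinAt)
      (by simp [hψ0]) (fun t => (hasDerivAt_pow_succ_div_factorial (p + 1) t).const_mul C)
      (fun t ht => ih (u := fun j => u (j + 1)) (fun j hj => hu (j + 1) (by omega)) hlast
        (Ico_subset_Icc_self ht)) ht

theorem hasDerivAt_iteratedFDeriv_comp_add_smul {E F : Type*} [NormedAddCommGroup E]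
    [NormedSpace ℝ E] [NormedAddCommGroup F] [NormedSpace ℝ F] {f : E → F} {x v : E} {t : ℝ}
    {n : ℕ} (hf : ContDiffAt ℝ (n + 1) f (x + t • v)) :
    HasDerivAt (fun s : ℝ => iteratedFDeriv ℝ n f (x + s • v) (fun _ => v))
      (iteratedFDeriv ℝ (n + 1) f (x + t • v) (fun _ => v)) t := by
  rw [← hf.deriv_fderiv_add_smul]
  have := hf.differentiableAt_iteratedFDeriv (m := n) (by norm_cast; omega)
  exact DifferentiableAt.hasDerivAt (by fun_prop)

theorem abs_sub_omegaTaylor_le {E : Type*} [NormedAddCommGroup E] [InnerProductSpace ℝ E]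
    {p : ℕ} {f : E → ℝ} {U : Set E} {x y : E} {L : ℝ} (hU : IsOpen U)
    (hf : ContDiffOn ℝ (p : ℕ∞) f U) (hseg : segment ℝ x y ⊆ U)
    (hLip : ∀ z ∈ segment ℝ x y,
      ‖iteratedFDeriv ℝ p f z - iteratedFDeriv ℝ p f x‖ ≤ L * ‖z - x‖) :
    |f y - OmegaTaylor p f x y| ≤ L / (p + 1)! * ‖y - x‖ ^ (p + 1) := by
  set v := y - x
  have hmem : ∀ t ∈ Icc (0 : ℝ) 1, x + t • v ∈ segment ℝ x y := fun t ht => by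
    rw [segment_eq_image']
    exact ⟨t, ht, rfl⟩
  have hderiv : ∀ j < p, ∀ t ∈ Icc (0 : ℝ) 1,
      HasDerivAt (fun s : ℝ => iteratedFDeriv ℝ j f (x + s • v) (fun _ => v))
        (iteratedFDeriv ℝ (j + 1) f (x + t • v) (fun _ => v)) t := fun j hj t ht =>
    hasDerivAt_iteratedFDeriv_comp_add_smul <|
      (hf.contDiffAt (hU.mem_nhds (hseg (hmem t ht)))).of_le (by norm_cast)
  have hlast : ∀ t ∈ Icc (0 : ℝ) 1,
      |iteratedFDeriv ℝ p f (x + t • v) (fun _ => v) -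
          iteratedFDeriv ℝ p f (x + (0 : ℝ) • v) (fun _ => v)| ≤ L * ‖v‖ ^ (p + 1) * t := fun t ht => by
    rw [zero_smul, add_zero, ← sub_apply, ← Real.norm_eq_abs]
    calc _ ≤ ‖iteratedFDeriv ℝ p f (x + t • v) - iteratedFDeriv ℝ p f x‖ * ‖v‖ ^ p :=
          ContinuousMultilinearMap.le_opNorm_mul_pow_of_le _ (pi_norm_const_le v)
      _ ≤ L * ‖t • v‖ * ‖v‖ ^ p := by
          gcongr
          simpa using hLip _ (hmem t ht)
      _ = L * ‖v‖ ^ (p + 1) * t := by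
          rw [norm_smul, Real.norm_of_nonneg ht.1]
          ring
  have := abs_sub_sum_taylor_le_of_hasDerivAt hderiv hlast (t := 1) (by simp)
  simpa [OmegaTaylor, v, div_eq_mul_inv, mul_comm, mul_left_comm, mul_assoc] using this

theorem rcts_one_step_global_bound_general
    {E : Type*} [NormedAddCommGroup E] [InnerProductSpace ℝ E]
    (p : ℕ) (hp : 2 ≤ p) (f h F : E → ℝ) (domh U : Set E)
    (hU : IsOpen U) (hsub : domh ⊆ U)
    (hf : ContDiffOn ℝ (p : ℕ∞) f U)
    (hhconv : ConvexOn ℝ domh h)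
    (hF : ∀ z, F z = f z + h z)
    (Lp H : ℝ) (hLp : 0 ≤ Lp) (hH : (p : ℝ) * Lp ≤ H)
    (hLip : ∀ z ∈ domh, ∀ w ∈ domh,
      ‖iteratedFDeriv ℝ p f z - iteratedFDeriv ℝ p f w‖ ≤ Lp * ‖z - w‖)
    (xstar : E) (hxstar : xstar ∈ domh)
    (Fstar : ℝ) (hFstar : Fstar = F xstar)
    (x : E) (hx : x ∈ domh) (T : E) (hT : T ∈ domh)
    (hmin : ∀ y ∈ domh,
      OmegaTaylor p f x T + H / (Nat.factorial (p + 1) : ℝ) * ‖T - x‖ ^ (p + 1) + h T ≤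
        OmegaTaylor p f x y + H / (Nat.factorial (p + 1) : ℝ) * ‖y - x‖ ^ (p + 1) + h y) :
    F T - Fstar ≤ (H + Lp) / (Nat.factorial (p + 1) : ℝ) * ‖x - xstar‖ ^ (p + 1) := by
  have taylor : ∀ y ∈ domh, |f y - OmegaTaylor p f x y| ≤ Lp / (p + 1)! * ‖y - x‖ ^ (p + 1) :=
    fun y hy => abs_sub_omegaTaylor_le hU hf
      (fun z hz => hsub (hhconv.1.segment_subset hx hy hz))
      (fun z hz => hLip z (hhconv.1.segment_subset hx hy hz) x hx)
  have hLH : Lp ≤ H := by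
    have : (2 : ℝ) ≤ p := by exact_mod_cast hp
    nlinarith
  have hgap : Lp / (p + 1)! * ‖T - x‖ ^ (p + 1) ≤ H / (p + 1)! * ‖T - x‖ ^ (p + 1) := by
    gcongr
  calc F T - Fstar = f T + h T - (f xstar + h xstar) := by rw [hFstar, hF, hF]
    _ ≤ OmegaTaylor p f x T + H / (p + 1)! * ‖T - x‖ ^ (p + 1) + h T - (f xstar + h xstar) := by
        linarith [le_of_abs_le (taylor T hT)]
    _ ≤ OmegaTaylor p f x xstar + H / (p + 1)! * ‖xstar - x‖ ^ (p + 1) + h xstar -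
          (f xstar + h xstar) := by
        linarith [hmin xstar hxstar]
    _ ≤ (H + Lp) / (p + 1)! * ‖x - xstar‖ ^ (p + 1) := by
        rw [norm_sub_rev x xstar, add_div, add_mul]
        linarith [neg_le_of_abs_le (taylor xstar hxstar)]

/-- one-step global guarantee of the tensor step. If `H ≥ pL_p`, `x* ` is a
global minimizer of `F = f + h` and `T` is the tensor step from `x ∈ dom h`, then
`F(T) − F* ≤ ((H+L_p)/(p+1)!) ‖x − x*‖^{p+1}`. -/
theorem rcts_one_step_global_bound
    {E : Type*} [NormedAddCommGroup E] [InnerProductSpace ℝ E] [FiniteDimensional ℝ E]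
    (p : ℕ) (hp : 2 ≤ p) (f h F : E → ℝ) (domh U : Set E)
    (hdomcl : IsClosed domh) (hU : IsOpen U) (hUconv : Convex ℝ U) (hsub : domh ⊆ U)
    (hf : ContDiffOn ℝ (p : ℕ∞) f U) (hfconv : ConvexOn ℝ U f)
    (hhconv : ConvexOn ℝ domh h) (hhlsc : LowerSemicontinuousOn h domh)
    (hF : ∀ z, F z = f z + h z)
    (Lp H : ℝ) (hLp : 0 ≤ Lp) (hH : (p : ℝ) * Lp ≤ H)
    (hLip : ∀ z ∈ domh, ∀ w ∈ domh,
      ‖iteratedFDeriv ℝ p f z - iteratedFDeriv ℝ p f w‖ ≤ Lp * ‖z - w‖)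
    (xstar : E) (hxstar : xstar ∈ domh) (hminF : ∀ y ∈ domh, F xstar ≤ F y)
    (Fstar : ℝ) (hFstar : Fstar = F xstar)
    (x : E) (hx : x ∈ domh) (T : E) (hT : T ∈ domh)
    (hmin : ∀ y ∈ domh,
      OmegaTaylor p f x T + H / (Nat.factorial (p + 1) : ℝ) * ‖T - x‖ ^ (p + 1) + h T ≤
        OmegaTaylor p f x y + H / (Nat.factorial (p + 1) : ℝ) * ‖y - x‖ ^ (p + 1) + h y) :
    F T - Fstar ≤ (H + Lp) / (Nat.factorial (p + 1) : ℝ) * ‖x - xstar‖ ^ (p + 1) :=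
  rcts_one_step_global_bound_general p hp f h F domh U hU hsub hf hhconv hF Lp H hLp hH hLip xstar
    hxstar Fstar hFstar x hx T hT hmin
end
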